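/- For h ≥ 2 and n = t·h + 1 ≥ 7h², the signless Laplacian spectral radius satisfies q(L_{t,h}) < q(S_{n,h}). -/

import Mathlib

open scoped Classical

/-- The signless Laplacian matrix `Q(G) = D(G) + A(G)` of a graph. -/
noncomputable def Qmat {V : Type*} [Fintype V] [DecidableEq V] (G : SimpleGraph V) :
    Matrix V V ℝ :=
  Matrix.diagonal (fun v => (G.degree v : ℝ)) + G.adjMatrix ℝ

/-- The signless Laplacian spectral radius `q(G)`: the largest eigenvalue of `Q(G)`. -/
noncomputable def qspec {V : Type*} [Fintype V] [DecidableEq V] (G : SimpleGraph V) : ℝ :=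
  sSup (spectrum ℝ (Qmat G))

/-- The number of edges `e(G)`. -/
noncomputable def ecount {V : Type*} (G : SimpleGraph V) : ℕ := G.edgeSet.ncard

/-- `Contains G H` : `G` contains a copy of `H` as a (not necessarily induced) subgraph. -/
def Contains {V W : Type*} (G : SimpleGraph V) (H : SimpleGraph W) : Prop :=
  ∃ f : W → V, Function.Injective f ∧ ∀ a b, H.Adj a b → G.Adj (f a) (f b)

/-- `k` vertex-disjoint copies of the path `P₃` on three vertices. -/
def kP3 (k : ℕ) : SimpleGraph (Fin k × Fin 3) where
  Adj x y := x.1 = y.1 ∧ (x.2.val + 1 = y.2.val ∨ y.2.val + 1 = x.2.val)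
  symm := ⟨fun x y h => ⟨h.1.symm, h.2.symm⟩⟩
  loopless := ⟨fun x h => by omega⟩

/-- The linear forest `P_{a 0} ∪ P_{a 1} ∪ ⋯ ∪ P_{a (k-1)}`. -/
def linearForest (k : ℕ) (a : Fin k → ℕ) : SimpleGraph (Σ i : Fin k, Fin (a i)) where
  Adj x y := x.1 = y.1 ∧ (x.2.val + 1 = y.2.val ∨ y.2.val + 1 = x.2.val)
  symm := ⟨fun x y h => ⟨h.1.symm, h.2.symm⟩⟩
  loopless := ⟨fun x h => by omega⟩

/-- `S_{n,h} = K_h ∇ complement (K_{n-h})`, the join of a clique on `h` vertices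
with an independent set on `n - h` vertices. -/
def Snh (n h : ℕ) : SimpleGraph (Fin n) where
  Adj u v := u ≠ v ∧ (u.val < h ∨ v.val < h)
  symm := ⟨fun u v h => ⟨h.1.symm, h.2.symm⟩⟩
  loopless := ⟨fun u h => h.1 rfl⟩

/-- `S⁺_{n,h}` : `S_{n,h}` with one extra edge (between vertices `h` and `h+1`)
inside the independent part. -/
def Spnh (n h : ℕ) : SimpleGraph (Fin n) where
  Adj u v := u ≠ v ∧ (u.val < h ∨ v.val < h ∨
    (u.val = h ∧ v.val = h + 1) ∨ (u.val = h + 1 ∧ v.val = h))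
  symm := ⟨fun u v h => ⟨h.1.symm, by tauto⟩⟩
  loopless := ⟨fun u h => h.1 rfl⟩

/-- `N₆` : the graph obtained from the triangle `{0,1,2}` by attaching pendant
vertices `3,4,5` to `0,1,2` respectively. -/
def N6 : SimpleGraph (Fin 6) where
  Adj u v := u ≠ v ∧ ((u.val < 3 ∧ v.val < 3) ∨ v.val = u.val + 3 ∨ u.val = v.val + 3)
  symm := ⟨fun u v h => ⟨h.1.symm, by tauto⟩⟩
  loopless := ⟨fun u h => by omega⟩

/-- `F_{n,k}(H) = K_{k-1} ∇ (H ∪ p·K₂ ∪ K_s)` for a graph `H` on `h` vertices,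
where `n - (k + h - 1) = 2p + s`, `0 ≤ s < 2`.  Vertices `0,…,k-2` form the
dominating clique, `H` is placed on vertices `k-1,…,k-2+h`, and the remaining
vertices form a matching (plus one isolated vertex when `s = 1`). -/
def FnkH (n k h : ℕ) (H : SimpleGraph (Fin h)) : SimpleGraph (Fin n) where
  Adj u v := u ≠ v ∧ (u.val < k - 1 ∨ v.val < k - 1 ∨
    (∃ (hu : u.val - (k - 1) < h) (hv : v.val - (k - 1) < h),
      k - 1 ≤ u.val ∧ k - 1 ≤ v.val ∧
        H.Adj ⟨u.val - (k - 1), hu⟩ ⟨v.val - (k - 1), hv⟩) ∨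
    (k - 1 + h ≤ u.val ∧ (u.val - (k - 1 + h)) % 2 = 0 ∧ v.val = u.val + 1) ∨
    (k - 1 + h ≤ v.val ∧ (v.val - (k - 1 + h)) % 2 = 0 ∧ u.val = v.val + 1))
  symm := by
    constructor
    rintro u v ⟨hne, h⟩
    refine ⟨hne.symm, ?_⟩
    rcases h with h | h | ⟨hu, hv, h1, h2, h3⟩ | h | h
    · tauto
    · tauto
    · exact Or.inr (Or.inr (Or.inl ⟨hv, hu, h2, h1, h3.symm⟩))
    · tauto
    · tauto
  loopless := by
    constructor
    rintro u ⟨hne, _⟩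
    exact hne rfl

/-- `F_{n,k} = F_{n,k}(K₂) = K_{k-1} ∇ (p·K₂ ∪ K_s)`. -/
def Fnk (n k : ℕ) : SimpleGraph (Fin n) := FnkH n k 2 ⊤

/-- `H_{n,1}` : obtained from `S_{n-2,2}` (on vertices `0,…,n-3`, with dominating
vertices `0,1`) and a triangle `{0, n-2, n-1}`, identifying the max-degree vertex
`0` of `S_{n-2,2}` with a vertex of `K₃`. -/
def Hn1 (n : ℕ) : SimpleGraph (Fin n) where
  Adj u v := u ≠ v ∧ ((u.val < n - 2 ∧ v.val < n - 2 ∧ (u.val < 2 ∨ v.val < 2)) ∨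
    ((u.val = 0 ∨ n - 2 ≤ u.val) ∧ (v.val = 0 ∨ n - 2 ≤ v.val)))
  symm := ⟨fun u v h => ⟨h.1.symm, by tauto⟩⟩
  loopless := ⟨fun u h => h.1 rfl⟩

/-- `L_{t,h} = K₁ ∇ (t·K_h)` : one vertex joined to `t` disjoint copies of `K_h`. -/
def Lth (t h : ℕ) : SimpleGraph (Fin (t * h + 1)) where
  Adj u v := u ≠ v ∧ (u.val = 0 ∨ v.val = 0 ∨ (u.val - 1) / h = (v.val - 1) / h)
  symm := ⟨fun u v h => ⟨h.1.symm, by tauto⟩⟩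
  loopless := ⟨fun u h => h.1 rfl⟩

/-- `L_{t₁,t₂,h,h+1} = K₁ ∇ (t₁·K_h ∪ t₂·K_{h+1})`. -/
def Lt1t2 (t1 t2 h : ℕ) : SimpleGraph (Fin (t1 * h + t2 * (h + 1) + 1)) where
  Adj u v := u ≠ v ∧ (u.val = 0 ∨ v.val = 0 ∨
    (u.val ≤ t1 * h ∧ v.val ≤ t1 * h ∧ (u.val - 1) / h = (v.val - 1) / h) ∨
    (t1 * h < u.val ∧ t1 * h < v.val ∧
      (u.val - 1 - t1 * h) / (h + 1) = (v.val - 1 - t1 * h) / (h + 1)))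
  symm := ⟨fun u v h => ⟨h.1.symm, by tauto⟩⟩
  loopless := ⟨fun u h => h.1 rfl⟩

lemma mem_spectrum_of_mulVec {m : Type*} [Fintype m] [DecidableEq m] (M : Matrix m m ℝ)
    (lam : ℝ) (v : m → ℝ) (hv : v ≠ 0) (heq : M.mulVec v = lam • v) :
    lam ∈ spectrum ℝ M := by
  rw [spectrum.mem_iff]
  intro hU
  rw [Matrix.isUnit_iff_isUnit_det] at hU
  have hd : (algebraMap ℝ (Matrix m m ℝ) lam - M).det = 0 := by
    refine Matrix.exists_mulVec_eq_zero_iff.1 ⟨v, hv, ?_⟩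
    rw [Algebra.algebraMap_eq_smul_one, Matrix.sub_mulVec, Matrix.smul_mulVec,
      Matrix.one_mulVec, heq, sub_self]
  rw [hd] at hU
  exact not_isUnit_zero hU

lemma spec_le_of_rowsum {m : Type*} [Fintype m] [DecidableEq m] [Nonempty m]
    (M : Matrix m m ℝ) (hM : ∀ i j, 0 ≤ M i j) (w : m → ℝ) (hw : ∀ i, 0 < w i) (R : ℝ)
    (hR : ∀ i, ∑ j, M i j * w j ≤ R * w i) : ∀ lam ∈ spectrum ℝ M, lam ≤ R := by
  intro lam hlam
  rw [spectrum.mem_iff] at hlam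
  have hd : (algebraMap ℝ (Matrix m m ℝ) lam - M).det = 0 := by
    by_contra h0
    exact hlam ((Matrix.isUnit_iff_isUnit_det _).2 (isUnit_iff_ne_zero.2 h0))
  obtain ⟨v, hv0, hv⟩ := Matrix.exists_mulVec_eq_zero_iff.2 hd
  have heig : M.mulVec v = lam • v := by
    rw [Algebra.algebraMap_eq_smul_one, Matrix.sub_mulVec, Matrix.smul_mulVec,
      Matrix.one_mulVec, sub_eq_zero] at hv
    exact hv.symm
  obtain ⟨i0, -, hmax⟩ := Finset.exists_max_image Finset.univ (fun i => |v i| / w i)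
    ⟨Classical.arbitrary m, Finset.mem_univ _⟩
  have hvpos : 0 < |v i0| := by
    obtain ⟨k, hk⟩ := Function.ne_iff.1 hv0
    have h1 : 0 < |v k| / w k := div_pos (abs_pos.2 hk) (hw k)
    have h2 := hmax k (Finset.mem_univ k)
    have h3 : 0 < |v i0| / w i0 := lt_of_lt_of_le h1 h2
    have := mul_pos h3 (hw i0)
    rwa [div_mul_cancel₀ _ (ne_of_gt (hw i0))] at this
  have key : ∀ j, |v j| ≤ |v i0| / w i0 * w j := by
    intro j
    have h2 := (div_le_div_iff₀ (hw j) (hw i0)).1 (hmax j (Finset.mem_univ j))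
    rw [div_mul_eq_mul_div, le_div_iff₀ (hw i0)]
    linarith
  have h1 : lam * v i0 = ∑ j, M i0 j * v j := by
    have := congrFun heig i0
    simpa [Matrix.mulVec, dotProduct, mul_comm] using this.symm
  have h2 : |lam| * |v i0| ≤ R * |v i0| := by
    calc |lam| * |v i0| = |∑ j, M i0 j * v j| := by rw [← abs_mul, h1]
      _ ≤ ∑ j, |M i0 j * v j| := Finset.abs_sum_le_sum_abs _ _
      _ = ∑ j, M i0 j * |v j| := by
          refine Finset.sum_congr rfl fun j _ => ?_
          rw [abs_mul, abs_of_nonneg (hM i0 j)]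
      _ ≤ ∑ j, M i0 j * (|v i0| / w i0 * w j) :=
          Finset.sum_le_sum fun j _ => mul_le_mul_of_nonneg_left (key j) (hM i0 j)
      _ = |v i0| / w i0 * ∑ j, M i0 j * w j := by
          rw [Finset.mul_sum]; exact Finset.sum_congr rfl fun j _ => by ring
      _ ≤ |v i0| / w i0 * (R * w i0) :=
          mul_le_mul_of_nonneg_left (hR i0) (div_nonneg (abs_nonneg _) (hw i0).le)
      _ = R * |v i0| := by rw [mul_comm R (w i0), ← mul_assoc, div_mul_cancel₀ _ (ne_of_gt (hw i0)), mul_comm]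
  have h3 : |lam| ≤ R := le_of_mul_le_mul_right (by linarith [h2]) hvpos
  exact le_trans (le_abs_self lam) h3

lemma qmat_nonneg {V : Type*} [Fintype V] [DecidableEq V] (G : SimpleGraph V) :
    ∀ i j, 0 ≤ Qmat G i j := by
  intro i j
  simp only [Qmat, Matrix.add_apply, Matrix.diagonal_apply, SimpleGraph.adjMatrix_apply]
  have : (0:ℝ) ≤ (if i = j then (G.degree i : ℝ) else 0) := by split <;> positivity
  have : (0:ℝ) ≤ (if G.Adj i j then (1:ℝ) else 0) := by split <;> norm_num
  positivity

lemma rowsum_eq {m : ℕ} (G : SimpleGraph (Fin m)) (w : Fin m → ℝ) (i : Fin m) :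
    ∑ j, Qmat G i j * w j
      = (G.degree i : ℝ) * w i + ∑ j, (if G.Adj i j then w j else 0) := by
  simp only [Qmat, Matrix.add_apply, Matrix.diagonal_apply, SimpleGraph.adjMatrix_apply,
    add_mul, Finset.sum_add_distrib, ite_mul, zero_mul, one_mul]
  congr 1
  rw [Finset.sum_ite_eq Finset.univ i (fun j => (G.degree i : ℝ) * w j)]
  simp

lemma card_filter_lt {n : ℕ} (h : ℕ) (hhn : h ≤ n) :
    (Finset.univ.filter fun v : Fin n => (v : ℕ) < h).card = h := by
  rw [← Fintype.card_fin h]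
  refine Finset.card_bij' (fun v hv => ⟨(v : ℕ), by simpa using hv⟩)
    (fun w _ => ⟨(w : ℕ), lt_of_lt_of_le w.isLt hhn⟩) ?_ ?_ ?_ ?_
  · intro a ha; exact Finset.mem_univ _
  · intro a _; simp [Fin.isLt]
  · intro a ha; ext; simp
  · intro a ha; ext; simp

lemma deg_le {m : ℕ} (G : SimpleGraph (Fin m)) (i : Fin m) : G.degree i ≤ m := by
  classical
  calc G.degree i = (G.neighborFinset i).card := rfl
    _ ≤ (Finset.univ : Finset (Fin m)).card := Finset.card_le_univ _
    _ = m := by simp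

lemma bddAbove_spectrum_qmat {m : ℕ} (hm : 0 < m) (G : SimpleGraph (Fin m)) :
    BddAbove (spectrum ℝ (Qmat G)) := by
  have : Nonempty (Fin m) := ⟨⟨0, hm⟩⟩
  refine ⟨2 * m, fun lam hlam => ?_⟩
  refine spec_le_of_rowsum (Qmat G) (qmat_nonneg G) (fun _ => 1) (fun _ => one_pos)
    (2 * m) (fun i => ?_) lam hlam
  rw [rowsum_eq]
  have h1 : (G.degree i : ℝ) ≤ m := by exact_mod_cast deg_le G i
  have h2 : ∑ j, (if G.Adj i j then (1:ℝ) else 0) ≤ ∑ j : Fin m, (1:ℝ) := by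
    refine Finset.sum_le_sum fun j _ => ?_
    split <;> norm_num
  simp only [Finset.sum_const, Finset.card_univ, Fintype.card_fin, nsmul_eq_mul,
    mul_one] at h2 ⊢
  linarith

lemma snh_mem_spectrum (n h : ℕ) (hh : 2 ≤ h) (hhn : h < n) (lam : ℝ)
    (hquad : lam ^ 2 = ((n : ℝ) + 2 * h - 2) * lam - 2 * h * (h - 1)) :
    lam ∈ spectrum ℝ (Qmat (Snh n h)) := by
  have hn1 : 1 ≤ n := le_trans (by omega) hhn.le
  set x : Fin n → ℝ := fun v => if (v : ℕ) < h then lam - h else (h : ℝ) with hx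
  have hx0 : x ≠ 0 := by
    intro h0
    have := congrFun h0 ⟨h, hhn⟩
    simp [hx] at this
    exact absurd this (by positivity)
  refine mem_spectrum_of_mulVec _ lam x hx0 ?_
  -- total sum
  have hcard2 : (Finset.univ.filter fun v : Fin n => ¬ (v : ℕ) < h).card = n - h := by
    have := Finset.card_filter_add_card_filter_not (s := (Finset.univ : Finset (Fin n)))
      (p := fun v : Fin n => (v : ℕ) < h)
    rw [card_filter_lt h hhn.le] at this
    simp only [Finset.card_univ, Fintype.card_fin] at this
    omega
  have hStot : ∑ v : Fin n, x v = (h : ℝ) * (lam - h) + ((n : ℝ) - h) * h := by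
    rw [hx]
    rw [Finset.sum_ite]
    simp only [Finset.sum_const, nsmul_eq_mul, card_filter_lt h hhn.le, hcard2]
    rw [Nat.cast_sub hhn.le]
  have hSpart : ∑ v : Fin n, (if (v : ℕ) < h then lam - (h:ℝ) else 0) = (h : ℝ) * (lam - h) := by
    rw [Finset.sum_ite]
    simp [card_filter_lt h hhn.le]; ring
  funext u
  have hmv : (Qmat (Snh n h)).mulVec x u
      = ((Snh n h).degree u : ℝ) * x u + ∑ j, (if (Snh n h).Adj u j then x j else 0) := by
    simp only [Matrix.mulVec, dotProduct, Qmat, Matrix.add_apply, Matrix.diagonal_apply,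
      SimpleGraph.adjMatrix_apply, add_mul, Finset.sum_add_distrib, ite_mul, zero_mul, one_mul]
    congr 1
    rw [Finset.sum_ite_eq Finset.univ u (fun j => ((Snh n h).degree u : ℝ) * x j)]
    simp
  rw [hmv]
  by_cases hu : (u : ℕ) < h
  · -- dominating vertex
    have hnb : (Snh n h).neighborFinset u = Finset.univ.erase u := by
      ext v
      simp only [SimpleGraph.mem_neighborFinset, Finset.mem_erase, Finset.mem_univ, and_true]
      constructor
      · rintro ⟨h1, -⟩; exact h1.symm
      · intro h1; exact ⟨h1.symm, Or.inl hu⟩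
    have hd : ((Snh n h).degree u : ℝ) = (n : ℝ) - 1 := by
      rw [SimpleGraph.degree, hnb, Finset.card_erase_of_mem (Finset.mem_univ u)]
      simp only [Finset.card_univ, Fintype.card_fin]
      rw [Nat.cast_sub hn1]
      norm_num
    have hsum : ∑ j, (if (Snh n h).Adj u j then x j else 0) = (∑ j, x j) - x u := by
      have hpt : ∀ j : Fin n, (if (Snh n h).Adj u j then x j else 0)
          = x j - (if j = u then x j else 0) := by
        intro j
        by_cases hj : j = u
        · subst hj; simp [SimpleGraph.irrefl]
        · have : (Snh n h).Adj u j := ⟨fun e => hj e.symm, Or.inl hu⟩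
          simp [this, hj]
      rw [Finset.sum_congr rfl fun j _ => hpt j, Finset.sum_sub_distrib,
        Finset.sum_ite_eq' Finset.univ u x]
      simp
    rw [hd, hsum, hStot]
    have hxu : x u = lam - h := by simp [hx, hu]
    rw [hxu]
    simp only [Pi.smul_apply, smul_eq_mul, hxu]
    linear_combination -hquad
  · -- independent vertex
    have hnb : (Snh n h).neighborFinset u = Finset.univ.filter (fun v : Fin n => (v:ℕ) < h) := by
      ext v
      simp only [SimpleGraph.mem_neighborFinset, Finset.mem_filter, Finset.mem_univ, true_and]
      constructor
      · rintro ⟨-, h2 | h2⟩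
        · exact absurd h2 hu
        · exact h2
      · intro h1
        refine ⟨fun e => hu ?_, Or.inr h1⟩
        rw [e]; exact h1
    have hd : ((Snh n h).degree u : ℝ) = (h : ℝ) := by
      rw [SimpleGraph.degree, hnb, card_filter_lt h hhn.le]
    have hsum : ∑ j, (if (Snh n h).Adj u j then x j else 0)
        = (h : ℝ) * (lam - h) := by
      rw [← hSpart]
      refine Finset.sum_congr rfl fun j _ => ?_
      by_cases hj : (j : ℕ) < h
      · have hadj : (Snh n h).Adj u j := by
          refine ⟨fun e => hu ?_, Or.inr hj⟩
          rw [← e] at hj; exact hj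
        simp [hadj, hx, hj]
      · have hadj : ¬ (Snh n h).Adj u j := by
          rintro ⟨-, h2 | h2⟩
          · exact hu h2
          · exact hj h2
        simp [hadj, hj]
    have hxu : x u = (h : ℝ) := by simp [hx, hu]
    rw [hd, hsum]
    simp only [Pi.smul_apply, smul_eq_mul, hxu]
    ring

lemma lth_spec_le (h t : ℕ) (hh : 2 ≤ h) (ht : 1 ≤ t) :
    ∀ lam ∈ spectrum ℝ (Qmat (Lth t h)), lam ≤ (t : ℝ) * h + h := by
  have hpos : 0 < h := by omega
  set n := t * h + 1 with hn
  have hval0 : ∀ u : Fin n, (u : ℕ) = 0 ↔ u = 0 := by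
    intro u
    constructor
    · intro e; exact Fin.ext e
    · intro e; rw [e]; rfl
  set w : Fin n → ℝ := fun u => if u = 0 then (t : ℝ) else 1 with hw
  refine spec_le_of_rowsum _ (qmat_nonneg _) w
    (fun u => by
      rw [hw]; dsimp only
      split
      · exact_mod_cast ht
      · exact one_pos)
    ((t : ℝ) * h + h) (fun i => ?_)
  rw [rowsum_eq]
  have hdlt : ((Lth t h).degree i : ℝ) ≤ (t : ℝ) * h := by
    have := (Lth t h).degree_lt_card_verts i
    rw [Fintype.card_fin] at this
    have h2 : (Lth t h).degree i ≤ t * h := by omega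
    exact_mod_cast h2
  by_cases hi : i = 0
  · -- center row
    subst hi
    have hwi : w (0 : Fin n) = (t : ℝ) := by rw [hw]; simp
    have hsum : ∑ j, (if (Lth t h).Adj 0 j then w j else 0)
        ≤ ∑ j : Fin n, (if j = 0 then (0:ℝ) else 1) := by
      refine Finset.sum_le_sum fun j _ => ?_
      by_cases hadj : (Lth t h).Adj 0 j
      · have hj0 : j ≠ 0 := fun e => (Lth t h).irrefl (e ▸ hadj)
        simp [hadj, hj0, hw]
      · simp only [hadj, if_false]
        split <;> norm_num
    have hsum2 : ∑ j : Fin n, (if j = (0:Fin n) then (0:ℝ) else 1) = (t : ℝ) * h := by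
      have : ∀ j : Fin n, (if j = (0:Fin n) then (0:ℝ) else 1)
          = 1 - (if j = (0:Fin n) then (1:ℝ) else 0) := by
        intro j; split <;> norm_num
      rw [Finset.sum_congr rfl fun j _ => this j, Finset.sum_sub_distrib]
      rw [Finset.sum_ite_eq' Finset.univ (0 : Fin n) (fun _ => (1:ℝ))]
      simp only [Finset.mem_univ, if_true, Finset.sum_const, Finset.card_univ,
        Fintype.card_fin, nsmul_eq_mul, mul_one, hn]
      push_cast
      ring
    rw [hwi]
    have := le_trans hsum (le_of_eq hsum2)
    have hts : (1:ℝ) ≤ (t:ℝ) := by exact_mod_cast ht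
    nlinarith [hdlt, this]
  · -- clique vertex row
    have hwi : w i = 1 := by rw [hw]; simp [hi]
    have hival : (i : ℕ) ≠ 0 := fun e => hi (Fin.ext e)
    set T : Finset (Fin n) := Finset.univ.filter
      (fun v : Fin n => v ≠ i ∧ (v : ℕ) ≠ 0 ∧ ((v:ℕ) - 1) / h = ((i:ℕ) - 1) / h) with hT
    have hTcard : T.card ≤ h - 1 := by
      have hsub : ∀ v ∈ T, (⟨((v:ℕ) - 1) % h, Nat.mod_lt _ hpos⟩ : Fin h)
          ∈ (Finset.univ.erase (⟨((i:ℕ) - 1) % h, Nat.mod_lt _ hpos⟩ : Fin h)) := by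
        intro v hv
        rw [hT, Finset.mem_filter] at hv
        obtain ⟨-, hvi, hv0, hdiv⟩ := hv
        refine Finset.mem_erase.2 ⟨?_, Finset.mem_univ _⟩
        intro e
        have hmod : ((v:ℕ) - 1) % h = ((i:ℕ) - 1) % h := by
          have := congrArg Fin.val e
          simpa using this
        have d1 := Nat.div_add_mod ((v:ℕ) - 1) h
        have d2 := Nat.div_add_mod ((i:ℕ) - 1) h
        rw [hdiv] at d1
        exact hvi (Fin.ext (by omega))
      have hinj : Set.InjOn (fun v : Fin n => (⟨((v:ℕ) - 1) % h, Nat.mod_lt _ hpos⟩ : Fin h)) T := by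
        intro a ha b hb e
        simp only [Finset.mem_coe, hT, Finset.mem_filter, Finset.mem_univ, true_and] at ha hb
        obtain ⟨-, ha0, hadiv⟩ := ha
        obtain ⟨-, hb0, hbdiv⟩ := hb
        have hmod : ((a:ℕ) - 1) % h = ((b:ℕ) - 1) % h := by
          have := congrArg Fin.val e
          simpa using this
        have h1 : (a:ℕ) - 1 = (b:ℕ) - 1 := by
          have d1 := Nat.div_add_mod ((a:ℕ) - 1) h
          have d2 := Nat.div_add_mod ((b:ℕ) - 1) h
          rw [hadiv] at d1
          rw [hbdiv] at d2
          omega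
        exact Fin.ext (by omega)
      calc T.card ≤ (Finset.univ.erase (⟨((i:ℕ) - 1) % h, Nat.mod_lt _ hpos⟩ : Fin h)).card :=
            Finset.card_le_card_of_injOn _ hsub hinj
        _ = h - 1 := by
            rw [Finset.card_erase_of_mem (Finset.mem_univ _)]
            simp
    have hadjT : ∀ j : Fin n, (Lth t h).Adj i j → j ≠ 0 → j ∈ T := by
      intro j hadj hj0
      obtain ⟨hne, hcase⟩ := hadj
      rw [hT, Finset.mem_filter]
      refine ⟨Finset.mem_univ _, fun e => hne e.symm, fun e => hj0 (Fin.ext e), ?_⟩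
      rcases hcase with h1 | h1 | h1
      · exact absurd h1 hival
      · exact absurd h1 (fun e => hj0 (Fin.ext e))
      · exact h1.symm
    have hdeg : ((Lth t h).degree i : ℝ) ≤ (h : ℝ) := by
      have hsub : (Lth t h).neighborFinset i ⊆ insert (0 : Fin n) T := by
        intro v hv
        rw [SimpleGraph.mem_neighborFinset] at hv
        by_cases hv0 : v = 0
        · exact Finset.mem_insert.2 (Or.inl hv0)
        · exact Finset.mem_insert.2 (Or.inr (hadjT v hv hv0))
      have : (Lth t h).degree i ≤ h := by
        calc (Lth t h).degree i ≤ (insert (0 : Fin n) T).card := Finset.card_le_card hsub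
          _ ≤ T.card + 1 := Finset.card_insert_le _ _
          _ ≤ h := by omega
      exact_mod_cast this
    have hsum : ∑ j, (if (Lth t h).Adj i j then w j else 0)
        ≤ (t : ℝ) + ((h : ℝ) - 1) := by
      have hpt : ∀ j : Fin n, (if (Lth t h).Adj i j then w j else 0)
          ≤ (if j = 0 then (t:ℝ) else 0) + (if j ∈ T then (1:ℝ) else 0) := by
        intro j
        by_cases hadj : (Lth t h).Adj i j
        · by_cases hj0 : j = 0
          · have hw0 : w j = (t:ℝ) := by rw [hw]; simp [hj0]
            have h2 : (0:ℝ) ≤ (if j ∈ T then (1:ℝ) else 0) := by split <;> norm_num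
            rw [if_pos hadj, hw0, if_pos hj0]
            linarith
          · have hjT : j ∈ T := hadjT j hadj hj0
            simp [hadj, hj0, hjT, hw]
        · have h1 : (0:ℝ) ≤ (if j = 0 then (t:ℝ) else 0) := by split <;> positivity
          have h2 : (0:ℝ) ≤ (if j ∈ T then (1:ℝ) else 0) := by split <;> norm_num
          simp only [hadj, if_false]
          linarith
      calc ∑ j, (if (Lth t h).Adj i j then w j else 0)
          ≤ ∑ j : Fin n, ((if j = 0 then (t:ℝ) else 0) + (if j ∈ T then (1:ℝ) else 0)) :=
            Finset.sum_le_sum fun j _ => hpt j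
        _ = (t : ℝ) + T.card := by
            rw [Finset.sum_add_distrib, Finset.sum_ite_eq' Finset.univ (0 : Fin n) (fun _ => (t:ℝ)),
              Finset.sum_boole]
            simp [hT]
        _ ≤ (t : ℝ) + ((h:ℝ) - 1) := by
            have : (T.card : ℝ) ≤ (h : ℝ) - 1 := by
              have : (T.card : ℝ) ≤ ((h - 1 : ℕ) : ℝ) := by exact_mod_cast hTcard
              rw [Nat.cast_sub (by omega)] at this
              simpa using this
            linarith
    rw [hwi]
    have hts : (1:ℝ) ≤ (t:ℝ) := by exact_mod_cast ht
    have hhs : (2:ℝ) ≤ (h:ℝ) := by exact_mod_cast hh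
    nlinarith [hdeg, hsum]


/-- `q(L_{t,h}) < q(S_{n,h})` for `n = t·h + 1 ≥ 7h²`. -/
theorem stmt_19 (h t : ℕ) (hh : 2 ≤ h) (hn : 7 * h ^ 2 ≤ t * h + 1) :
    qspec (Lth t h) < qspec (Snh (t * h + 1) h) := by
  have hpos : 0 < h := by omega
  have ht : 1 ≤ t := by nlinarith
  have hnh : h < t * h + 1 := by nlinarith
  have hH2 : (2:ℝ) ≤ (h:ℝ) := by exact_mod_cast hh
  have hN7 : 7 * (h:ℝ)^2 ≤ ((t*h+1 : ℕ) : ℝ) := by exact_mod_cast hn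
  have hNcast : ((t*h+1 : ℕ) : ℝ) = (t:ℝ)*h + 1 := by push_cast; ring
  have hdisc : (0:ℝ) ≤ (((t*h+1:ℕ):ℝ) + 2*h - 2)^2 - 8*h*((h:ℝ)-1) := by nlinarith
  have hs : Real.sqrt ((((t*h+1:ℕ):ℝ) + 2*h - 2)^2 - 8*h*((h:ℝ)-1)) ^ 2
      = (((t*h+1:ℕ):ℝ) + 2*h - 2)^2 - 8*h*((h:ℝ)-1) := Real.sq_sqrt hdisc
  set lam : ℝ := ((((t*h+1:ℕ):ℝ) + 2*h - 2)
      + Real.sqrt ((((t*h+1:ℕ):ℝ) + 2*h - 2)^2 - 8*h*((h:ℝ)-1))) / 2 with hlam_def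
  have hquad : lam ^ 2 = (((t*h+1:ℕ):ℝ) + 2*h - 2) * lam - 2*h*((h:ℝ)-1) := by
    rw [hlam_def]
    linear_combination (1/4 : ℝ) * hs
  have hmem := snh_mem_spectrum (t*h+1) h hh hnh lam hquad
  have hq_lower : lam ≤ qspec (Snh (t*h+1) h) :=
    le_csSup (bddAbove_spectrum_qmat (by omega) _) hmem
  have hupper : qspec (Lth t h) ≤ (t:ℝ)*h + h :=
    Real.sSup_le (lth_spec_le h t hh ht) (by positivity)
  have hNs : ((t*h+1:ℕ):ℝ)
      < Real.sqrt ((((t*h+1:ℕ):ℝ) + 2*h - 2)^2 - 8*h*((h:ℝ)-1)) := by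
    rw [Real.lt_sqrt (by positivity)]
    nlinarith
  have hlt : (t:ℝ)*h + h < lam := by
    rw [hlam_def]
    rw [hNcast] at hNs ⊢
    linarith
  calc qspec (Lth t h) ≤ (t:ℝ)*h + h := hupper
    _ < lam := hlt
    _ ≤ qspec (Snh (t*h+1) h) := hq_lower
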